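/- Let C ↔ f : [a,b] → ℝ^M and D ↔ g : [c,d] → ℝ^M (a < b, c < d) be continuous rectifiable curves that are Fréchet equivalent, and let F be a parametric integrand. Then the line integrals of F along C and along D (which exist) are equal: ∫_C F = ∫_D F. -/

import Mathlib

open scoped BigOperators ENNReal
open MeasureTheory Filter

noncomputable section

/-- A partition `a = x 0 < x 1 < ⋯ < x n = b` of the interval `[a,b]`. -/
structure IntervalPartition (a b : ℝ) where
  n : ℕ
  x : Fin (n + 1) → ℝ
  mono : StrictMono x
  first : x 0 = a
  last : x (Fin.last n) = b

/-- The mesh `‖P‖ = maxᵢ (xᵢ − xᵢ₋₁)` of a partition. -/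
def IntervalPartition.mesh {a b : ℝ} (P : IntervalPartition a b) : ℝ :=
  ⨆ i : Fin P.n, (P.x i.succ - P.x i.castSucc)

/-- The inscribed sum `V(f;P) = Σᵢ ‖f(xᵢ) − f(xᵢ₋₁)‖`. -/
def inscribedSum {M : ℕ} (f : ℝ → EuclideanSpace ℝ (Fin M)) {a b : ℝ}
    (P : IntervalPartition a b) : ℝ :=
  ∑ i : Fin P.n, ‖f (P.x i.succ) - f (P.x i.castSucc)‖

/-- The length `ℓ(C)` of the curve `C ↔ f : [a,b] → ℝ^M`: the supremum of the inscribed sums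
over all partitions of `[a,b]`, a value in `[0,+∞]`. -/
def curveLength {M : ℕ} (f : ℝ → EuclideanSpace ℝ (Fin M)) (a b : ℝ) : ℝ≥0∞ :=
  ⨆ P : IntervalPartition a b, ENNReal.ofReal (inscribedSum f P)

/-- The total variation `T_h[a,b]` of a real function `h` on `[a,b]`. -/
def totalVariation (h : ℝ → ℝ) (a b : ℝ) : ℝ≥0∞ :=
  ⨆ P : IntervalPartition a b, ENNReal.ofReal (∑ i : Fin P.n, |h (P.x i.succ) - h (P.x i.castSucc)|)

/-- The positive variation `T_h⁺[a,b]` of a real function `h` on `[a,b]`. -/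
def posVariation (h : ℝ → ℝ) (a b : ℝ) : ℝ≥0∞ :=
  ⨆ P : IntervalPartition a b,
    ENNReal.ofReal (∑ i : Fin P.n, max (h (P.x i.succ) - h (P.x i.castSucc)) 0)

/-- The negative variation `T_h⁻[a,b]` of a real function `h` on `[a,b]`. -/
def negVariation (h : ℝ → ℝ) (a b : ℝ) : ℝ≥0∞ :=
  ⨆ P : IntervalPartition a b,
    ENNReal.ofReal (∑ i : Fin P.n, max (h (P.x i.castSucc) - h (P.x i.succ)) 0)

/-- `h` is absolutely continuous on `[a,b]`: for every `ε > 0` there is `δ > 0` such that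
`Σᵢ |h(vᵢ) − h(uᵢ)| < ε` for every finite family of pairwise non-overlapping subintervals
`[uᵢ,vᵢ]` of `[a,b]` of total length `< δ`. -/
def AbsContOn (h : ℝ → ℝ) (a b : ℝ) : Prop :=
  ∀ ε > (0 : ℝ), ∃ δ > (0 : ℝ), ∀ n : ℕ, ∀ u v : Fin n → ℝ,
    (∀ i, a ≤ u i ∧ u i ≤ v i ∧ v i ≤ b) →
    (∀ i j, i ≠ j → Set.Ioo (u i) (v i) ∩ Set.Ioo (u j) (v j) = ∅) →
    (∑ i, (v i - u i)) < δ → (∑ i, |h (v i) - h (u i)|) < ε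

/-- `φ` is an increasing homeomorphism of `[a,b]` onto `[c,d]` sending `a` to `c` and `b` to `d`. -/
def IsIncrHomeo (φ : ℝ → ℝ) (a b c d : ℝ) : Prop :=
  ContinuousOn φ (Set.Icc a b) ∧ StrictMonoOn φ (Set.Icc a b) ∧ φ a = c ∧ φ b = d

/-- `f : [a,b] → ℝ^M` and `g : [c,d] → ℝ^M` are Fréchet equivalent. -/
def FrechetEquiv {M : ℕ} (f : ℝ → EuclideanSpace ℝ (Fin M)) (a b : ℝ)
    (g : ℝ → EuclideanSpace ℝ (Fin M)) (c d : ℝ) : Prop :=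
  ∀ ε > (0 : ℝ), ∃ φ : ℝ → ℝ, IsIncrHomeo φ a b c d ∧
    ∀ x ∈ Set.Icc a b, ‖f x - g (φ x)‖ < ε

/-- The Fréchet distance between the curves `C ↔ f : [a,b] → ℝ^M` and `D ↔ g : [c,d] → ℝ^M`. -/
def frechetDist {M : ℕ} (f : ℝ → EuclideanSpace ℝ (Fin M)) (a b : ℝ)
    (g : ℝ → EuclideanSpace ℝ (Fin M)) (c d : ℝ) : ℝ :=
  ⨅ φ : {φ : ℝ → ℝ // IsIncrHomeo φ a b c d}, ⨆ x ∈ Set.Icc a b, ‖f x - g (φ.1 x)‖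

/-- A parametric integrand: a continuous `F : ℝ^M × ℝ^M → ℝ` positively homogeneous of
degree 1 in the second variable. -/
def IsParametricIntegrand {M : ℕ}
    (F : EuclideanSpace ℝ (Fin M) → EuclideanSpace ℝ (Fin M) → ℝ) : Prop :=
  Continuous (fun p : EuclideanSpace ℝ (Fin M) × EuclideanSpace ℝ (Fin M) => F p.1 p.2) ∧
  ∀ K : ℝ, 0 ≤ K → ∀ x t, F x (K • t) = K * F x t

/-- `L` is the line integral `∫_C F` of `F` along the curve `C ↔ f : [a,b] → ℝ^M`:
the limit, as the mesh tends to `0`, of the Riemann-type sums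
`Σᵢ F(f(ξᵢ), f(xᵢ) − f(xᵢ₋₁))` over tagged partitions of `[a,b]`. -/
def IsLineIntegral {M : ℕ} (F : EuclideanSpace ℝ (Fin M) → EuclideanSpace ℝ (Fin M) → ℝ)
    (f : ℝ → EuclideanSpace ℝ (Fin M)) (a b : ℝ) (L : ℝ) : Prop :=
  ∀ ε > (0 : ℝ), ∃ δ > (0 : ℝ), ∀ P : IntervalPartition a b, P.mesh < δ →
    ∀ ξ : Fin P.n → ℝ, (∀ i, ξ i ∈ Set.Icc (P.x i.castSucc) (P.x i.succ)) →
    |(∑ i : Fin P.n, F (f (ξ i)) (f (P.x i.succ) - f (P.x i.castSucc))) - L| < ε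

/-!
Call a partition `δ`-fine for a curve when the curve oscillates by at most `δ` on each piece and
the inscribed polygon is within `δ` of the length. Since a parametric integrand is continuous and
positively homogeneous, `F x (∑ vⱼ)` differs from `∑ F yⱼ vⱼ` by `ε ∑ ‖vⱼ‖` plus a constant times
the excess `∑ ‖vⱼ‖ - ‖∑ vⱼ‖` as soon as the `yⱼ` are close to `x`, and along a refinement of a
`δ`-fine partition the total excess is at most `δ`. Hence the Riemann sums over fine tagged
partitions converge, and their limit is the line integral because a small mesh forces fineness.
Fineness only refers to the curve: transporting a fine partition along a reparametrization that
nearly matches the two curves gives a fine partition of the other curve, which has the same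
length, with nearly the same Riemann sum.
-/

open Finset
open scoped RealInnerProductSpace

lemma Finset.sum_range_eq_sum_range_sum_Ico {G : Type*} [AddCommMonoid G] {s : ℕ → ℕ}
    (hs : Monotone s) (hs0 : s 0 = 0) (g : ℕ → G) (n : ℕ) :
    ∑ j ∈ range (s n), g j = ∑ i ∈ range n, ∑ j ∈ Ico (s i) (s (i + 1)), g j := by
  induction n with
  | zero => simp [hs0]
  | succ n ih => rw [sum_range_succ, ← ih, sum_range_add_sum_Ico _ (hs n.le_succ)]

section Polygonal

variable {G : Type*} [SeminormedAddCommGroup G]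

lemma sum_norm_sub_comp_le {s : ℕ → ℕ} (hs : Monotone s) (hs0 : s 0 = 0) (x : ℕ → G) (n : ℕ) :
    ∑ k ∈ range n, ‖x (s (k + 1)) - x (s k)‖ ≤ ∑ j ∈ range (s n), ‖x (j + 1) - x j‖ := by
  rw [sum_range_eq_sum_range_sum_Ico hs hs0]
  gcongr with k
  rw [← sum_Ico_sub x (hs k.le_succ)]
  exact norm_sum_le _ _

lemma sum_norm_sub_le_add (x y : ℕ → G) {n : ℕ} {ε : ℝ} (h : ∀ k ≤ n, ‖x k - y k‖ ≤ ε) :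
    ∑ k ∈ range n, ‖x (k + 1) - x k‖ ≤ ∑ k ∈ range n, ‖y (k + 1) - y k‖ + 2 * n * ε := by
  have hterm : ∀ k ∈ range n, ‖x (k + 1) - x k‖ ≤ ‖y (k + 1) - y k‖ + 2 * ε := by
    intro k hk
    have hk := mem_range.1 hk
    calc ‖x (k + 1) - x k‖ = ‖(y (k + 1) - y k) + (x (k + 1) - y (k + 1)) - (x k - y k)‖ := by
          congr 1; abel
      _ ≤ ‖y (k + 1) - y k‖ + ‖x (k + 1) - y (k + 1)‖ + ‖x k - y k‖ := norm_sub_le_of_le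
          (norm_add_le _ _) le_rfl
      _ ≤ ‖y (k + 1) - y k‖ + 2 * ε := by linarith [h (k + 1) hk, h k hk.le]
  calc _ ≤ ∑ k ∈ range n, (‖y (k + 1) - y k‖ + 2 * ε) := sum_le_sum hterm
    _ = _ := by rw [sum_add_distrib, sum_const, card_range, nsmul_eq_mul]; ring

end Polygonal

lemma exists_forall_abs_sub_le_of_cauchy {ι : Type*} (S : ι → ℝ) {B : ℝ → Set ι} (hB : Monotone B)
    (hne : ∀ δ > 0, (B δ).Nonempty)
    (h : ∀ ε > 0, ∃ δ > 0, ∀ p ∈ B δ, ∀ q ∈ B δ, |S p - S q| ≤ ε) :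
    ∃ L, ∀ ε > 0, ∃ δ > 0, ∀ p ∈ B δ, |S p - L| ≤ ε := by
  have hl : (⨅ δ > (0 : ℝ), Filter.principal (B δ)).HasBasis (fun δ : ℝ => 0 < δ) B :=
    Filter.hasBasis_biInf_principal' (fun δ hδ δ' hδ' => ⟨min δ δ', lt_min hδ hδ',
      hB (min_le_left _ _), hB (min_le_right _ _)⟩) ⟨1, one_pos⟩
  have := hl.neBot_iff.2 fun hδ => hne _ hδ
  have hcauchy : Cauchy (Filter.map S (⨅ δ > (0 : ℝ), Filter.principal (B δ))) := by
    refine Metric.cauchy_iff.2 ⟨inferInstance, fun ε hε => ?_⟩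
    obtain ⟨δ, hδ, hδε⟩ := h (ε / 2) (half_pos hε)
    refine ⟨S '' B δ, Filter.image_mem_map (hl.mem_of_mem hδ), ?_⟩
    rintro _ ⟨p, hp, rfl⟩ _ ⟨q, hq, rfl⟩
    exact (hδε p hp q hq).trans_lt (half_lt_self hε)
  obtain ⟨L, hL⟩ := cauchy_map_iff_exists_tendsto.1 hcauchy
  refine ⟨L, fun ε hε => ?_⟩
  obtain ⟨δ, hδ, hδL⟩ := (hl.tendsto_iff Metric.nhds_basis_closedBall).1 hL ε hε
  exact ⟨δ, hδ, fun p hp => hδL p hp⟩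

section ParametricIntegrand

variable {E : Type*} [NormedAddCommGroup E] [InnerProductSpace ℝ E] {F : E → E → ℝ}

lemma norm_inv_norm_smul_le_one (v : E) : ‖‖v‖⁻¹ • v‖ ≤ 1 := by
  rcases eq_or_ne v 0 with rfl | hv
  · simp
  · rw [norm_smul, norm_inv, norm_norm, inv_mul_cancel₀ (norm_ne_zero_iff.2 hv)]

lemma norm_mul_norm_inv_norm_smul_sub_sq_le (u v : E) (hu : ‖u‖ ≤ 1) :
    ‖v‖ * ‖‖v‖⁻¹ • v - u‖ ^ 2 ≤ 2 * (‖v‖ - ⟪u, v⟫) := by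
  rcases eq_or_ne v 0 with rfl | hv
  · simp
  have hv' : ‖v‖ ≠ 0 := norm_ne_zero_iff.2 hv
  have hw : ‖‖v‖⁻¹ • v‖ = 1 := by rw [norm_smul, norm_inv, norm_norm, inv_mul_cancel₀ hv']
  rw [norm_sub_sq_real, hw, real_inner_smul_left, real_inner_comm]
  have hu2 : ‖u‖ ^ 2 ≤ 1 := by nlinarith [norm_nonneg u]
  have := mul_le_mul_of_nonneg_left hu2 (norm_nonneg v)
  field_simp
  nlinarith

lemma apply_zero_of_homogeneous (hF : ∀ K : ℝ, 0 ≤ K → ∀ x t, F x (K • t) = K * F x t) (x : E) :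
    F x 0 = 0 := by
  simpa using hF 0 le_rfl x 0

lemma apply_eq_norm_mul_apply_inv_norm_smul (hF : ∀ K : ℝ, 0 ≤ K → ∀ x t, F x (K • t) = K * F x t)
    (x t : E) : F x t = ‖t‖ * F x (‖t‖⁻¹ • t) := by
  rcases eq_or_ne t 0 with rfl | ht
  · simp [apply_zero_of_homogeneous hF]
  · rw [← hF _ (norm_nonneg t), smul_inv_smul₀ (norm_ne_zero_iff.2 ht)]

/-- Replacing the direction of `v` by `u` costs little when the two are close, and otherwise
the angle between them is paid for by `‖v‖ - ⟪u, v⟫`. -/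
lemma abs_apply_sub_norm_mul_apply_le (hF : ∀ K : ℝ, 0 ≤ K → ∀ x t, F x (K • t) = K * F x t)
    {x x' u : E} {m η ε : ℝ} (hη : 0 < η) (hu : ‖u‖ ≤ 1)
    (hm : ∀ w : E, ‖w‖ ≤ 1 → |F x' w - F x u| ≤ m)
    (hε : ∀ w : E, ‖w‖ ≤ 1 → ‖w - u‖ ≤ η → |F x' w - F x u| ≤ ε) (v : E) :
    |F x' v - ‖v‖ * F x u| ≤ ε * ‖v‖ + 2 * m / η ^ 2 * (‖v‖ - ⟪u, v⟫) := by
  have hw := norm_inv_norm_smul_le_one v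
  have hgeo := norm_mul_norm_inv_norm_smul_sub_sq_le u v hu
  have hm0 : 0 ≤ m := (abs_nonneg _).trans (hm u hu)
  rw [apply_eq_norm_mul_apply_inv_norm_smul hF x' v, ← mul_sub, abs_mul, abs_norm]
  by_cases hclose : ‖‖v‖⁻¹ • v - u‖ ≤ η
  · have h1 := mul_le_mul_of_nonneg_left (hε _ hw hclose) (norm_nonneg v)
    have hinner : ⟪u, v⟫ ≤ ‖v‖ := (real_inner_le_norm u v).trans
      (mul_le_of_le_one_left (norm_nonneg v) hu)
    have h2 : 0 ≤ 2 * m / η ^ 2 * (‖v‖ - ⟪u, v⟫) :=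
      mul_nonneg (by positivity) (sub_nonneg.2 hinner)
    linarith
  · have hη2 : η ^ 2 ≤ ‖‖v‖⁻¹ • v - u‖ ^ 2 := pow_le_pow_left₀ hη.le (not_le.1 hclose).le 2
    have h1 := mul_le_mul_of_nonneg_left (hm _ hw) (norm_nonneg v)
    have h2 : ‖v‖ * m ≤ m / η ^ 2 * (‖v‖ * ‖‖v‖⁻¹ • v - u‖ ^ 2) := by
      rw [div_mul_eq_mul_div, le_div_iff₀ (by positivity)]
      nlinarith [mul_le_mul_of_nonneg_left hη2 (mul_nonneg (norm_nonneg v) hm0)]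
    have h3 := mul_le_mul_of_nonneg_left hgeo (div_nonneg hm0 (sq_nonneg η))
    have h4 : 0 ≤ ε * ‖v‖ :=
      mul_nonneg ((abs_nonneg _).trans (hε u hu (by simpa using hη.le))) (norm_nonneg v)
    have h5 : m / η ^ 2 * (2 * (‖v‖ - ⟪u, v⟫)) = 2 * m / η ^ 2 * (‖v‖ - ⟪u, v⟫) := by ring
    linarith

lemma abs_sum_apply_sub_apply_sum_le (hF : ∀ K : ℝ, 0 ≤ K → ∀ x t, F x (K • t) = K * F x t)
    {X : Set E} {m η ε : ℝ} (hη : 0 < η) (hm : ∀ x ∈ X, ∀ w : E, ‖w‖ ≤ 1 → |F x w| ≤ m)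
    (hε : ∀ x ∈ X, ∀ x' ∈ X, ∀ w u : E, ‖w‖ ≤ 1 → ‖u‖ ≤ 1 → ‖x' - x‖ ≤ η → ‖w - u‖ ≤ η →
      |F x' w - F x u| ≤ ε)
    {ι : Type*} (s : Finset ι) {x : E} (hx : x ∈ X) (y v : ι → E)
    (hy : ∀ j ∈ s, y j ∈ X ∧ ‖y j - x‖ ≤ η) :
    |∑ j ∈ s, F (y j) (v j) - F x (∑ j ∈ s, v j)| ≤
      ε * ∑ j ∈ s, ‖v j‖ + (m + 4 * m / η ^ 2) * (∑ j ∈ s, ‖v j‖ - ‖∑ j ∈ s, v j‖) := by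
  set V := ∑ j ∈ s, v j
  set u := ‖V‖⁻¹ • V
  have hu : ‖u‖ ≤ 1 := norm_inv_norm_smul_le_one V
  have huV : ∑ j ∈ s, ⟪u, v j⟫ = ‖V‖ := by
    rw [← inner_sum, real_inner_smul_left, real_inner_self_eq_norm_sq]
    rcases eq_or_ne ‖V‖ 0 with h | h
    · simp [h]
    · field_simp
  have hexcess : 0 ≤ ∑ j ∈ s, ‖v j‖ - ‖V‖ := sub_nonneg.2 (norm_sum_le _ _)
  have hterm : ∀ j ∈ s, |F (y j) (v j) - ‖v j‖ * F x u| ≤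
      ε * ‖v j‖ + 2 * (2 * m) / η ^ 2 * (‖v j‖ - ⟪u, v j⟫) := fun j hj =>
    abs_apply_sub_norm_mul_apply_le hF hη hu
      (fun w hw => (abs_sub _ _).trans (by linarith [hm _ (hy j hj).1 w hw, hm x hx u hu]))
      (fun w hw hwu => hε x hx _ (hy j hj).1 w u hw hu (hy j hj).2 hwu) (v j)
  have hsplit : ∑ j ∈ s, F (y j) (v j) - F x V =
      ∑ j ∈ s, (F (y j) (v j) - ‖v j‖ * F x u) + (∑ j ∈ s, ‖v j‖ - ‖V‖) * F x u := by
    rw [apply_eq_norm_mul_apply_inv_norm_smul hF x V, sum_sub_distrib, ← sum_mul]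
    ring
  have hfirst : |∑ j ∈ s, (F (y j) (v j) - ‖v j‖ * F x u)| ≤
      ε * ∑ j ∈ s, ‖v j‖ + 4 * m / η ^ 2 * (∑ j ∈ s, ‖v j‖ - ‖V‖) := by
    refine (abs_sum_le_sum_abs _ _).trans ((sum_le_sum hterm).trans_eq ?_)
    rw [sum_add_distrib, ← mul_sum, ← mul_sum, sum_sub_distrib, huV]
    ring
  have hsecond : |(∑ j ∈ s, ‖v j‖ - ‖V‖) * F x u| ≤ m * (∑ j ∈ s, ‖v j‖ - ‖V‖) := by
    rw [abs_mul, abs_of_nonneg hexcess, mul_comm]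
    exact mul_le_mul_of_nonneg_right (hm x hx u hu) hexcess
  rw [hsplit]
  linarith [abs_add_le (∑ j ∈ s, (F (y j) (v j) - ‖v j‖ * F x u)) ((∑ j ∈ s, ‖v j‖ - ‖V‖) * F x u)]

lemma exists_abs_sum_apply_sub_apply_sum_le [ProperSpace E]
    (hFc : Continuous fun p : E × E => F p.1 p.2)
    (hF : ∀ K : ℝ, 0 ≤ K → ∀ x t, F x (K • t) = K * F x t) {X : Set E} (hX : IsCompact X)
    {ε : ℝ} (hε : 0 < ε) (ι : Type*) :
    ∃ η > 0, ∃ K ≥ 0, ∀ x ∈ X, ∀ (s : Finset ι) (y v : ι → E),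
      (∀ j ∈ s, y j ∈ X ∧ ‖y j - x‖ ≤ η) →
      |∑ j ∈ s, F (y j) (v j) - F x (∑ j ∈ s, v j)| ≤
        ε * ∑ j ∈ s, ‖v j‖ + K * (∑ j ∈ s, ‖v j‖ - ‖∑ j ∈ s, v j‖) := by
  have hK := hX.prod (isCompact_closedBall (0 : E) 1)
  obtain ⟨m, hm⟩ := hK.exists_bound_of_continuousOn hFc.continuousOn
  obtain ⟨η, hη, hηε⟩ := Metric.uniformContinuousOn_iff.1
    (hK.uniformContinuousOn_of_continuous hFc.continuousOn) ε hε
  have hmem : ∀ x ∈ X, ∀ w : E, ‖w‖ ≤ 1 → (x, w) ∈ X ×ˢ Metric.closedBall (0 : E) 1 :=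
    fun x hx w hw => ⟨hx, mem_closedBall_zero_iff.2 hw⟩
  have hm' : ∀ x ∈ X, ∀ w : E, ‖w‖ ≤ 1 → |F x w| ≤ max m 0 :=
    fun x hx w hw => (hm _ (hmem x hx w hw)).trans (le_max_left _ _)
  refine ⟨η / 2, half_pos hη, max m 0 + 4 * max m 0 / (η / 2) ^ 2, by positivity,
    fun x hx s y v hy => abs_sum_apply_sub_apply_sum_le hF (half_pos hη) hm' ?_ s hx y v hy⟩
  intro x hx x' hx' w u hw hu hxx hwu
  refine (hηε _ (hmem x' hx' w hw) _ (hmem x hx u hu) ?_).le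
  rw [Prod.dist_eq, dist_eq_norm, dist_eq_norm]
  exact max_lt (by linarith) (by linarith)

end ParametricIntegrand

lemma exists_pos_abs_sum_sub_sum_le {E : Type*} [NormedAddCommGroup E] {F : E → E → ℝ}
    (hFc : Continuous fun p : E × E => F p.1 p.2) {X : Set E} (hX : IsCompact X) (n : ℕ) {ε : ℝ}
    (hε : 0 < ε) :
    ∃ ρ > 0, ∀ x y : ℕ → E, (∀ k, x k ∈ X) → (∀ k, y k ∈ X) → (∀ k ≤ n, ‖x k - y k‖ ≤ ρ) →
      |∑ k ∈ range n, F (x k) (x (k + 1) - x k) - ∑ k ∈ range n, F (y k) (y (k + 1) - y k)| ≤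
        ε := by
  have hK : IsCompact ((fun p : E × E => (p.1, p.2 - p.1)) '' X ×ˢ X) :=
    (hX.prod hX).image (by fun_prop)
  obtain ⟨ρ, hρ, hρε⟩ := Metric.uniformContinuousOn_iff.1
    (hK.uniformContinuousOn_of_continuous hFc.continuousOn) (ε / (n + 1)) (by positivity)
  refine ⟨ρ / 3, by positivity, fun x y hx hy hxy => ?_⟩
  have hterm : ∀ k ∈ range n,
      |F (x k) (x (k + 1) - x k) - F (y k) (y (k + 1) - y k)| ≤ ε / (n + 1) := by
    intro k hk
    have hk := mem_range.1 hk
    have h1 := hxy k hk.le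
    have h2 := hxy (k + 1) hk
    refine (hρε _ ⟨(x k, x (k + 1)), ⟨hx k, hx (k + 1)⟩, rfl⟩
      _ ⟨(y k, y (k + 1)), ⟨hy k, hy (k + 1)⟩, rfl⟩ ?_).le
    have h3 : ‖(x (k + 1) - x k) - (y (k + 1) - y k)‖ ≤ ‖x (k + 1) - y (k + 1)‖ + ‖x k - y k‖ := by
      rw [sub_sub_sub_comm]
      exact norm_sub_le _ _
    rw [Prod.dist_eq, dist_eq_norm, dist_eq_norm]
    exact max_lt (by linarith) (by linarith)
  rw [← sum_sub_distrib]
  refine (abs_sum_le_sum_abs _ _).trans ((sum_le_sum hterm).trans ?_)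
  rw [sum_const, card_range, nsmul_eq_mul, mul_div_assoc', div_le_iff₀ (by positivity)]
  nlinarith

namespace IntervalPartition

variable {a b : ℝ} (P : IntervalPartition a b)

/-- Extended by `b` beyond `P.n`, so that sums over `range` need no bound checks. -/
def pt (k : ℕ) : ℝ := if h : k ≤ P.n then P.x ⟨k, Nat.lt_succ_of_le h⟩ else b

lemma pt_of_le {k : ℕ} (h : k ≤ P.n) : P.pt k = P.x ⟨k, Nat.lt_succ_of_le h⟩ := dif_pos h

lemma pt_of_lt {k : ℕ} (h : P.n < k) : P.pt k = b := dif_neg h.not_ge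

lemma pt_castSucc (i : Fin P.n) : P.pt i = P.x i.castSucc := P.pt_of_le i.is_lt.le

lemma pt_succ (i : Fin P.n) : P.pt (i + 1) = P.x i.succ := P.pt_of_le i.is_lt

lemma pt_zero : P.pt 0 = a := (P.pt_of_le (Nat.zero_le _)).trans P.first

lemma pt_n : P.pt P.n = b := (P.pt_of_le le_rfl).trans P.last

lemma pt_lt_pt {k l : ℕ} (hkl : k < l) (hl : l ≤ P.n) : P.pt k < P.pt l := by
  rw [P.pt_of_le (hkl.le.trans hl), P.pt_of_le hl]
  exact P.mono (Fin.mk_lt_mk.2 hkl)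

lemma pt_le_pt_n (k : ℕ) : P.pt k ≤ b := by
  rcases lt_trichotomy k P.n with hk | rfl | hk
  · exact (P.pt_lt_pt hk le_rfl).le.trans_eq P.pt_n
  · exact P.pt_n.le
  · exact (P.pt_of_lt hk).le

lemma monotone_pt : Monotone P.pt := by
  intro k l hkl
  rcases le_or_gt l P.n with hl | hl
  · rcases hkl.eq_or_lt with rfl | hkl
    · exact le_rfl
    · exact (P.pt_lt_pt hkl hl).le
  · rw [P.pt_of_lt hl]
    exact P.pt_le_pt_n k

lemma pt_mem_Icc (k : ℕ) : P.pt k ∈ Set.Icc a b :=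
  ⟨P.pt_zero.symm.trans_le (P.monotone_pt (Nat.zero_le k)), P.pt_le_pt_n k⟩

lemma Icc_pt_subset (k : ℕ) : Set.Icc (P.pt k) (P.pt (k + 1)) ⊆ Set.Icc a b :=
  Set.Icc_subset_Icc (P.pt_mem_Icc k).1 (P.pt_mem_Icc (k + 1)).2

lemma pt_succ_sub_pt_le_mesh {k : ℕ} (hk : k < P.n) : P.pt (k + 1) - P.pt k ≤ P.mesh := by
  have h := le_ciSup (Set.finite_range fun i : Fin P.n => P.x i.succ - P.x i.castSucc).bddAbove
    ⟨k, hk⟩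
  rwa [← P.pt_castSucc, ← P.pt_succ] at h

lemma mesh_nonneg : 0 ≤ P.mesh :=
  Real.iSup_nonneg fun i => sub_nonneg.2 (P.mono i.castSucc_lt_succ).le

lemma sum_fin_eq_sum_range {G : Type*} [AddCommMonoid G] (e : ℝ → ℝ → G) :
    ∑ i : Fin P.n, e (P.x i.castSucc) (P.x i.succ) =
      ∑ k ∈ range P.n, e (P.pt k) (P.pt (k + 1)) := by
  rw [← Fin.sum_univ_eq_sum_range (fun k => e (P.pt k) (P.pt (k + 1)))]
  simp only [pt_castSucc, pt_succ]

lemma exists_mesh_lt (hab : a < b) {μ : ℝ} (hμ : 0 < μ) :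
    ∃ P : IntervalPartition a b, P.mesh < μ := by
  obtain ⟨n, hn⟩ := exists_nat_gt ((b - a) / μ)
  have hn0 : (0 : ℝ) < n := (div_pos (sub_pos.2 hab) hμ).trans hn
  have hh : 0 < (b - a) / n := div_pos (sub_pos.2 hab) hn0
  refine ⟨⟨n, fun i => a + i * ((b - a) / n), fun i j hij => ?_, by simp, ?_⟩, ?_⟩
  · simpa using mul_lt_mul_of_pos_right (Nat.cast_lt.2 (Fin.lt_def.1 hij)) hh
  · simp [field]
  · have : Nonempty (Fin n) := ⟨⟨0, by exact_mod_cast hn0⟩⟩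
    unfold mesh
    refine (ciSup_le (c := (b - a) / n) fun i => le_of_eq ?_).trans_lt ?_
    · simp only [Fin.val_succ, Fin.val_castSucc, Nat.cast_add, Nat.cast_one]
      ring
    · rwa [div_lt_iff₀ hμ, mul_comm, ← div_lt_iff₀ hn0] at hn

lemma exists_monotone_dist_pt_le_mesh (P Q : IntervalPartition a b) :
    ∃ s : ℕ → ℕ, Monotone s ∧ s 0 = 0 ∧ s Q.n ≤ P.n ∧ ∀ k, dist (P.pt (s k)) (Q.pt k) ≤ P.mesh := by
  classical
  have hQP : ∀ k, Q.pt k ≤ P.pt P.n := fun k => (Q.pt_le_pt_n k).trans_eq P.pt_n.symm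
  have hex : ∀ k, ∃ j, Q.pt k ≤ P.pt j := fun k => ⟨P.n, hQP k⟩
  refine ⟨fun k => Nat.find (hex k), fun k l hkl => Nat.find_mono fun j hj =>
    (Q.monotone_pt hkl).trans hj, ?_, Nat.find_min' _ (hQP _), fun k => ?_⟩
  · exact Nat.le_zero.1 (Nat.find_min' _ (by rw [P.pt_zero, Q.pt_zero]))
  · have hle := Nat.find_spec (hex k)
    have hn : Nat.find (hex k) ≤ P.n := Nat.find_min' _ (hQP k)
    rw [Real.dist_eq, abs_of_nonneg (sub_nonneg.2 hle)]
    cases hj : Nat.find (hex k) with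
    | zero =>
      rw [P.pt_zero]
      linarith [(Q.pt_mem_Icc k).1, P.mesh_nonneg]
    | succ j =>
      have hlt : P.pt j < Q.pt k := not_le.1 (Nat.find_min (hex k) (by omega))
      linarith [P.pt_succ_sub_pt_le_mesh (k := j) (by omega)]

lemma strictMonoOn_pt (P : IntervalPartition a b) : StrictMonoOn P.pt (Set.Iic P.n) :=
  fun _ _ _ hl hkl => P.pt_lt_pt hkl hl

structure IsRefinement (R P : IntervalPartition a b) (s : ℕ → ℕ) : Prop where
  monotone : Monotone s
  map_zero : s 0 = 0
  map_n : s P.n = R.n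
  pt_comp : ∀ i ≤ P.n, R.pt (s i) = P.pt i

namespace IsRefinement

variable {R P : IntervalPartition a b} {s : ℕ → ℕ}

lemma sum_range (h : R.IsRefinement P s) {G : Type*} [AddCommMonoid G] (g : ℕ → G) :
    ∑ j ∈ range R.n, g j = ∑ i ∈ range P.n, ∑ j ∈ Ico (s i) (s (i + 1)), g j := by
  rw [← h.map_n, sum_range_eq_sum_range_sum_Ico h.monotone h.map_zero]

lemma sum_Ico_sub (h : R.IsRefinement P s) {G : Type*} [AddCommGroup G] (v : ℝ → G) {i : ℕ}
    (hi : i < P.n) :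
    ∑ j ∈ Ico (s i) (s (i + 1)), (v (R.pt (j + 1)) - v (R.pt j)) =
      v (P.pt (i + 1)) - v (P.pt i) := by
  rw [Finset.sum_Ico_sub (fun j => v (R.pt j)) (h.monotone i.le_succ), h.pt_comp _ hi,
    h.pt_comp _ hi.le]

lemma lt_n_of_mem_Ico (h : R.IsRefinement P s) {i j : ℕ} (hi : i < P.n)
    (hj : j ∈ Ico (s i) (s (i + 1))) : j < R.n :=
  (mem_Ico.1 hj).2.trans_le (h.map_n ▸ h.monotone hi)

lemma Icc_subset (h : R.IsRefinement P s) {i j : ℕ} (hi : i < P.n)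
    (hj : j ∈ Ico (s i) (s (i + 1))) :
    Set.Icc (R.pt j) (R.pt (j + 1)) ⊆ Set.Icc (P.pt i) (P.pt (i + 1)) := by
  rw [← h.pt_comp _ hi.le, ← h.pt_comp _ hi]
  obtain ⟨h1, h2⟩ := mem_Ico.1 hj
  exact Set.Icc_subset_Icc (R.monotone_pt h1) (R.monotone_pt h2)

end IsRefinement

lemma exists_isRefinement (R Q : IntervalPartition a b)
    (h : ∀ i ≤ Q.n, ∃ k ≤ R.n, R.pt k = Q.pt i) : ∃ s, R.IsRefinement Q s := by
  choose! t htn ht using h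
  have hmin : ∀ i, min i Q.n ≤ Q.n := fun i => min_le_right _ _
  refine ⟨fun i => t (min i Q.n), fun i j hij => ?_, ?_, ?_, fun i hi => ?_⟩
  · refine (R.strictMonoOn_pt.le_iff_le (htn _ (hmin i)) (htn _ (hmin j))).1 ?_
    rw [ht _ (hmin i), ht _ (hmin j)]
    exact Q.monotone_pt (min_le_min_right _ hij)
  · refine R.strictMonoOn_pt.injOn (htn _ (hmin 0)) (Nat.zero_le R.n) ?_
    simp only [Nat.zero_min, ht 0 (Nat.zero_le _), Q.pt_zero, R.pt_zero]
  · refine R.strictMonoOn_pt.injOn (htn _ (hmin Q.n)) (le_refl R.n) ?_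
    simp only [min_self, ht Q.n le_rfl, Q.pt_n, R.pt_n]
  · simp only [min_eq_left hi, ht i hi]

lemma exists_pt_eq_of_mem_finset (S : Finset ℝ) (ha : a ∈ S) (hb : b ∈ S)
    (hS : ∀ t ∈ S, t ∈ Set.Icc a b) :
    ∃ R : IntervalPartition a b, ∀ t ∈ S, ∃ k ≤ R.n, R.pt k = t := by
  have hcard : S.card = (S.card - 1) + 1 := (Nat.succ_pred_eq_of_pos (card_pos.2 ⟨a, ha⟩)).symm
  set e := S.orderEmbOfFin hcard
  refine ⟨⟨S.card - 1, fun i => e i, e.strictMono, ?_, ?_⟩, fun t ht => ?_⟩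
  · refine (S.orderEmbOfFin_zero hcard (Nat.succ_pos _)).trans ?_
    exact le_antisymm (S.min'_le a ha) (S.le_min' _ _ fun t ht => (hS t ht).1)
  · refine (S.orderEmbOfFin_last hcard (Nat.succ_pos _)).trans ?_
    exact le_antisymm (S.max'_le _ _ fun t ht => (hS t ht).2) (S.le_max' b hb)
  · obtain ⟨i, hi⟩ : t ∈ Set.range e := by rw [range_orderEmbOfFin]; exact ht
    exact ⟨i, Nat.lt_succ_iff.1 i.is_lt, by rw [pt_of_le _ (Nat.lt_succ_iff.1 i.is_lt)]; exact hi⟩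

lemma exists_common_refinement (P P' : IntervalPartition a b) :
    ∃ (R : IntervalPartition a b) (s s' : ℕ → ℕ), R.IsRefinement P s ∧ R.IsRefinement P' s' := by
  classical
  have hmem : ∀ (Q : IntervalPartition a b) (i), i ≤ Q.n → Q.pt i ∈ image Q.pt (range (Q.n + 1)) :=
    fun Q i hi => mem_image_of_mem _ (mem_range.2 (Nat.lt_succ_of_le hi))
  obtain ⟨R, hR⟩ := exists_pt_eq_of_mem_finset
    (image P.pt (range (P.n + 1)) ∪ image P'.pt (range (P'.n + 1)))
    (mem_union_left _ (P.pt_zero ▸ hmem P 0 (Nat.zero_le _)))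
    (mem_union_left _ (P.pt_n ▸ hmem P P.n le_rfl))
    (by
      simp only [mem_union, mem_image]
      rintro t (⟨k, -, rfl⟩ | ⟨k, -, rfl⟩) <;> exact pt_mem_Icc _ k)
  obtain ⟨s, hs⟩ := exists_isRefinement R P fun i hi => hR _ (mem_union_left _ (hmem P i hi))
  obtain ⟨s', hs'⟩ := exists_isRefinement R P' fun i hi => hR _ (mem_union_right _ (hmem P' i hi))
  exact ⟨R, s, s', hs, hs'⟩

end IntervalPartition

section Length

variable {M : ℕ} {f g : ℝ → EuclideanSpace ℝ (Fin M)} {a b c d : ℝ}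

lemma inscribedSum_eq_sum_range (f : ℝ → EuclideanSpace ℝ (Fin M)) (P : IntervalPartition a b) :
    inscribedSum f P = ∑ k ∈ range P.n, ‖f (P.pt (k + 1)) - f (P.pt k)‖ :=
  P.sum_fin_eq_sum_range fun s t => ‖f t - f s‖

lemma inscribedSum_nonneg (f : ℝ → EuclideanSpace ℝ (Fin M)) (P : IntervalPartition a b) :
    0 ≤ inscribedSum f P :=
  sum_nonneg fun _ _ => norm_nonneg _

lemma inscribedSum_le_toReal_curveLength (hf : curveLength f a b ≠ ⊤) (P : IntervalPartition a b) :
    inscribedSum f P ≤ (curveLength f a b).toReal :=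
  (ENNReal.ofReal_le_iff_le_toReal hf).1 (le_iSup (fun P => ENNReal.ofReal (inscribedSum f P)) P)

lemma curveLength_le_of_forall_exists_norm_sub_le
    (h : ∀ P : IntervalPartition a b, ∀ ε > 0, ∃ Q : IntervalPartition c d, Q.n = P.n ∧
      ∀ k ≤ P.n, ‖f (P.pt k) - g (Q.pt k)‖ ≤ ε) :
    curveLength f a b ≤ curveLength g c d := by
  refine iSup_le fun P => ?_
  rcases eq_or_ne (curveLength g c d) ⊤ with hg | hg
  · exact hg ▸ le_top
  rw [ENNReal.ofReal_le_iff_le_toReal hg]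
  refine le_of_forall_pos_le_add fun ε hε => ?_
  obtain ⟨Q, hQn, hQ⟩ := h P (ε / (2 * P.n + 1)) (by positivity)
  have hfg := sum_norm_sub_le_add (fun k => f (P.pt k)) (fun k => g (Q.pt k)) hQ
  have hε' : 2 * P.n * (ε / (2 * P.n + 1)) ≤ ε := by
    rw [mul_div_assoc', div_le_iff₀ (by positivity)]
    linarith
  have hQℓ := inscribedSum_le_toReal_curveLength hg Q
  rw [inscribedSum_eq_sum_range, hQn] at hQℓ
  rw [inscribedSum_eq_sum_range]
  linarith

lemma exists_toReal_curveLength_sub_lt_inscribedSum (hab : a < b) (hf : curveLength f a b ≠ ⊤)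
    {δ : ℝ} (hδ : 0 < δ) :
    ∃ P : IntervalPartition a b, (curveLength f a b).toReal - δ < inscribedSum f P := by
  rcases lt_or_ge ((curveLength f a b).toReal - δ) 0 with hneg | hnn
  · obtain ⟨P, -⟩ := IntervalPartition.exists_mesh_lt hab one_pos
    exact ⟨P, hneg.trans_le (inscribedSum_nonneg f P)⟩
  · have hlt : ENNReal.ofReal ((curveLength f a b).toReal - δ) < curveLength f a b := by
      rw [ENNReal.ofReal_lt_iff_lt_toReal hnn hf]
      linarith
    obtain ⟨P, hP⟩ := lt_iSup_iff.1 hlt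
    exact ⟨P, (ENNReal.ofReal_lt_ofReal_iff_of_nonneg hnn).1 hP⟩

lemma exists_pos_forall_mesh_lt_toReal_curveLength_sub_le (hab : a < b)
    (hcf : ContinuousOn f (Set.Icc a b)) (hf : curveLength f a b ≠ ⊤) {δ : ℝ} (hδ : 0 < δ) :
    ∃ μ > 0, ∀ P : IntervalPartition a b, P.mesh < μ →
      (curveLength f a b).toReal - δ ≤ inscribedSum f P := by
  obtain ⟨P₀, hP₀⟩ := exists_toReal_curveLength_sub_lt_inscribedSum hab hf (half_pos hδ)
  set θ := δ / (4 * (P₀.n + 1))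
  obtain ⟨μ, hμ, hfμ⟩ := Metric.uniformContinuousOn_iff.1
    (isCompact_Icc.uniformContinuousOn_of_continuous hcf) θ (by positivity)
  refine ⟨μ, hμ, fun P hP => ?_⟩
  -- compare `P₀` with the points of `P` just to the right of its points
  obtain ⟨s, hs, hs0, hsn, hsP⟩ := P.exists_monotone_dist_pt_le_mesh P₀
  have hclose : ∀ k ≤ P₀.n, ‖f (P₀.pt k) - f (P.pt (s k))‖ ≤ θ := fun k _ => by
    rw [← dist_eq_norm, dist_comm]
    exact (hfμ _ (P.pt_mem_Icc _) _ (P₀.pt_mem_Icc _) ((hsP k).trans_lt hP)).le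
  have h1 := sum_norm_sub_le_add _ _ hclose
  have h2 := sum_norm_sub_comp_le hs hs0 (fun j => f (P.pt j)) P₀.n
  have h3 : ∑ j ∈ range (s P₀.n), ‖f (P.pt (j + 1)) - f (P.pt j)‖ ≤ inscribedSum f P := by
    rw [inscribedSum_eq_sum_range]
    exact sum_le_sum_of_subset_of_nonneg (range_subset_range.2 hsn) fun _ _ _ => norm_nonneg _
  have h4 : 2 * P₀.n * θ ≤ δ / 2 := by
    rw [mul_div_assoc', div_le_div_iff₀ (by positivity) two_pos]
    nlinarith
  rw [inscribedSum_eq_sum_range] at hP₀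
  linarith

end Length

section RiemannSum

variable {M : ℕ} {f : ℝ → EuclideanSpace ℝ (Fin M)} {a b : ℝ}
  {F : EuclideanSpace ℝ (Fin M) → EuclideanSpace ℝ (Fin M) → ℝ}

def IntervalPartition.IsTagging (P : IntervalPartition a b) (τ : ℕ → ℝ) : Prop :=
  ∀ j < P.n, τ j ∈ Set.Icc (P.pt j) (P.pt (j + 1))

lemma IntervalPartition.isTagging_pt (P : IntervalPartition a b) : P.IsTagging P.pt :=
  fun j _ => ⟨le_rfl, P.monotone_pt j.le_succ⟩

def riemannSum (F : EuclideanSpace ℝ (Fin M) → EuclideanSpace ℝ (Fin M) → ℝ)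
    (f : ℝ → EuclideanSpace ℝ (Fin M)) (P : IntervalPartition a b) (τ : ℕ → ℝ) : ℝ :=
  ∑ j ∈ range P.n, F (f (τ j)) (f (P.pt (j + 1)) - f (P.pt j))

/-- Fineness measured on the curve rather than on the parameter interval, so that it survives
reparametrization, unlike the mesh. -/
def IntervalPartition.IsFine (P : IntervalPartition a b) (f : ℝ → EuclideanSpace ℝ (Fin M))
    (δ : ℝ) : Prop :=
  (∀ j < P.n, ∀ s ∈ Set.Icc (P.pt j) (P.pt (j + 1)), ∀ t ∈ Set.Icc (P.pt j) (P.pt (j + 1)),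
    ‖f s - f t‖ ≤ δ) ∧ (curveLength f a b).toReal - δ ≤ inscribedSum f P

lemma IntervalPartition.IsFine.mono {P : IntervalPartition a b} {δ δ' : ℝ} (hP : P.IsFine f δ)
    (h : δ ≤ δ') : P.IsFine f δ' :=
  ⟨fun j hj s hs t ht => (hP.1 j hj s hs t ht).trans h, by linarith [hP.2]⟩

lemma exists_pos_forall_mesh_lt_isFine (hab : a < b) (hcf : ContinuousOn f (Set.Icc a b))
    (hf : curveLength f a b ≠ ⊤) {δ : ℝ} (hδ : 0 < δ) :
    ∃ μ > 0, ∀ P : IntervalPartition a b, P.mesh < μ → P.IsFine f δ := by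
  obtain ⟨μ₁, hμ₁, hfμ₁⟩ := Metric.uniformContinuousOn_iff.1
    (isCompact_Icc.uniformContinuousOn_of_continuous hcf) δ hδ
  obtain ⟨μ₂, hμ₂, hμ₂δ⟩ := exists_pos_forall_mesh_lt_toReal_curveLength_sub_le hab hcf hf hδ
  refine ⟨min μ₁ μ₂, lt_min hμ₁ hμ₂, fun P hP => ⟨fun j hj s hs t ht => ?_,
    hμ₂δ P (hP.trans_le (min_le_right _ _))⟩⟩
  refine (dist_eq_norm (f s) (f t) ▸ hfμ₁ s (P.Icc_pt_subset j hs) t (P.Icc_pt_subset j ht) ?_).le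
  rw [Real.dist_eq, abs_sub_lt_iff]
  have := P.pt_succ_sub_pt_le_mesh hj
  have := min_le_left μ₁ μ₂
  constructor <;> linarith [hs.1, hs.2, ht.1, ht.2]

lemma exists_abs_riemannSum_sub_le (hcf : ContinuousOn f (Set.Icc a b))
    (hF : IsParametricIntegrand F) {ε : ℝ} (hε : 0 < ε) :
    ∃ η > 0, ∃ K ≥ 0, ∀ (P R : IntervalPartition a b) (s : ℕ → ℕ) (τ τ' : ℕ → ℝ),
      R.IsRefinement P s → P.IsTagging τ → R.IsTagging τ' →
      (∀ i < P.n, ∀ t ∈ Set.Icc (P.pt i) (P.pt (i + 1)), ‖f t - f (τ i)‖ ≤ η) →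
      |riemannSum F f R τ' - riemannSum F f P τ| ≤
        ε * inscribedSum f R + K * (inscribedSum f R - inscribedSum f P) := by
  obtain ⟨η, hη, K, hK, hFK⟩ := exists_abs_sum_apply_sub_apply_sum_le hF.1 hF.2
    (isCompact_Icc.image_of_continuousOn hcf) hε ℕ
  refine ⟨η, hη, K, hK, fun P R s τ τ' hs hτ hτ' hosc => ?_⟩
  have hgroup : ∀ i ∈ range P.n,
      |∑ j ∈ Ico (s i) (s (i + 1)), F (f (τ' j)) (f (R.pt (j + 1)) - f (R.pt j)) -
          F (f (τ i)) (f (P.pt (i + 1)) - f (P.pt i))| ≤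
        ε * ∑ j ∈ Ico (s i) (s (i + 1)), ‖f (R.pt (j + 1)) - f (R.pt j)‖ +
          K * (∑ j ∈ Ico (s i) (s (i + 1)), ‖f (R.pt (j + 1)) - f (R.pt j)‖ -
            ‖f (P.pt (i + 1)) - f (P.pt i)‖) := by
    intro i hi
    rw [mem_range] at hi
    rw [← hs.sum_Ico_sub f hi]
    refine hFK _ (Set.mem_image_of_mem f (P.Icc_pt_subset i (hτ i hi))) _ _ _ fun j hj => ?_
    have hτ'j := hτ' j (hs.lt_n_of_mem_Ico hi hj)
    exact ⟨Set.mem_image_of_mem f (R.Icc_pt_subset j hτ'j), hosc i hi _ (hs.Icc_subset hi hj hτ'j)⟩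
  rw [riemannSum, riemannSum, inscribedSum_eq_sum_range, inscribedSum_eq_sum_range, hs.sum_range,
    hs.sum_range, ← sum_sub_distrib]
  refine (abs_sum_le_sum_abs _ _).trans ((sum_le_sum hgroup).trans_eq ?_)
  rw [sum_add_distrib, ← mul_sum, ← mul_sum, sum_sub_distrib]

end RiemannSum

section FineLimit

variable {M : ℕ} {f : ℝ → EuclideanSpace ℝ (Fin M)} {a b : ℝ}
  {F : EuclideanSpace ℝ (Fin M) → EuclideanSpace ℝ (Fin M) → ℝ}

lemma exists_pos_abs_riemannSum_sub_le_of_isFine (hcf : ContinuousOn f (Set.Icc a b))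
    (hf : curveLength f a b ≠ ⊤) (hF : IsParametricIntegrand F) {ε : ℝ} (hε : 0 < ε) :
    ∃ δ > 0, ∀ (P P' : IntervalPartition a b) (τ τ' : ℕ → ℝ), P.IsFine f δ → P'.IsFine f δ →
      P.IsTagging τ → P'.IsTagging τ' → |riemannSum F f P τ - riemannSum F f P' τ'| ≤ ε := by
  set ℓ := (curveLength f a b).toReal
  have hℓ : 0 ≤ ℓ := ENNReal.toReal_nonneg
  obtain ⟨η, hη, K, hK, hηK⟩ := exists_abs_riemannSum_sub_le (F := F) hcf hF
    (show 0 < ε / (4 * (ℓ + 1)) by positivity)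
  set δ := min η (ε / (4 * (K + 1)))
  have hδ : 0 < δ := lt_min hη (by positivity)
  have hrefine : ∀ (Q R : IntervalPartition a b) (s : ℕ → ℕ) (τ : ℕ → ℝ), R.IsRefinement Q s →
      Q.IsFine f δ → Q.IsTagging τ → |riemannSum F f R R.pt - riemannSum F f Q τ| ≤ ε / 2 := by
    intro Q R s τ hs hQ hτ
    have h := hηK Q R s τ R.pt hs hτ R.isTagging_pt fun i hi t ht =>
      (hQ.1 i hi t ht (τ i) (hτ i hi)).trans (min_le_left _ _)
    have hRℓ := inscribedSum_le_toReal_curveLength hf R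
    have h1 : ε / (4 * (ℓ + 1)) * inscribedSum f R ≤ ε / 4 := by
      rw [div_mul_eq_mul_div, div_le_div_iff₀ (by positivity) (by norm_num)]
      nlinarith [inscribedSum_nonneg f R]
    have h2 : K * (inscribedSum f R - inscribedSum f Q) ≤ ε / 4 := by
      have hδK : K * δ ≤ ε / 4 := by
        calc K * δ ≤ K * (ε / (4 * (K + 1))) := mul_le_mul_of_nonneg_left (min_le_right _ _) hK
          _ ≤ ε / 4 := by
            rw [mul_div_assoc', div_le_div_iff₀ (by positivity) (by norm_num)]
            nlinarith
      nlinarith [hQ.2]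
    linarith
  refine ⟨δ, hδ, fun P P' τ τ' hP hP' hτ hτ' => ?_⟩
  obtain ⟨R, s, s', hs, hs'⟩ := IntervalPartition.exists_common_refinement P P'
  have h := hrefine P R s τ hs hP hτ
  have h' := hrefine P' R s' τ' hs' hP' hτ'
  rw [abs_le] at h h' ⊢
  constructor <;> linarith

lemma exists_isFine (hab : a < b) (hcf : ContinuousOn f (Set.Icc a b))
    (hf : curveLength f a b ≠ ⊤) {δ : ℝ} (hδ : 0 < δ) : ∃ P : IntervalPartition a b, P.IsFine f δ :=
  let ⟨_, hμ, hμδ⟩ := exists_pos_forall_mesh_lt_isFine hab hcf hf hδ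
  let ⟨P, hP⟩ := IntervalPartition.exists_mesh_lt hab hμ
  ⟨P, hμδ P hP⟩

def HasFineLimit (F : EuclideanSpace ℝ (Fin M) → EuclideanSpace ℝ (Fin M) → ℝ)
    (f : ℝ → EuclideanSpace ℝ (Fin M)) (a b L : ℝ) : Prop :=
  ∀ ε > 0, ∃ δ > 0, ∀ (P : IntervalPartition a b) (τ : ℕ → ℝ), P.IsFine f δ → P.IsTagging τ →
    |riemannSum F f P τ - L| ≤ ε

lemma exists_hasFineLimit (hab : a < b) (hcf : ContinuousOn f (Set.Icc a b))
    (hf : curveLength f a b ≠ ⊤) (hF : IsParametricIntegrand F) : ∃ L, HasFineLimit F f a b L := by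
  obtain ⟨L, hL⟩ := exists_forall_abs_sub_le_of_cauchy
    (fun p : IntervalPartition a b × (ℕ → ℝ) => riemannSum F f p.1 p.2)
    (B := fun δ => {p | p.1.IsFine f δ ∧ p.1.IsTagging p.2})
    (fun δ δ' h p hp => ⟨hp.1.mono h, hp.2⟩)
    (fun δ hδ => let ⟨P, hP⟩ := exists_isFine hab hcf hf hδ; ⟨(P, P.pt), hP, P.isTagging_pt⟩)
    (fun ε hε => by
      obtain ⟨δ, hδ, h⟩ := exists_pos_abs_riemannSum_sub_le_of_isFine hcf hf hF hε
      exact ⟨δ, hδ, fun p hp q hq => h _ _ _ _ hp.1 hq.1 hp.2 hq.2⟩)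
  exact ⟨L, fun ε hε => let ⟨δ, hδ, h⟩ := hL ε hε; ⟨δ, hδ, fun P τ hP hτ => h (P, τ) ⟨hP, hτ⟩⟩⟩

lemma HasFineLimit.isLineIntegral {L : ℝ} (hL : HasFineLimit F f a b L) (hab : a < b)
    (hcf : ContinuousOn f (Set.Icc a b)) (hf : curveLength f a b ≠ ⊤) :
    IsLineIntegral F f a b L := by
  intro ε hε
  obtain ⟨δ, hδ, hδL⟩ := hL (ε / 2) (half_pos hε)
  obtain ⟨μ, hμ, hμδ⟩ := exists_pos_forall_mesh_lt_isFine hab hcf hf hδ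
  refine ⟨μ, hμ, fun P hP ξ hξ => ?_⟩
  let τ : ℕ → ℝ := fun j => if h : j < P.n then ξ ⟨j, h⟩ else 0
  have hτ : ∀ i : Fin P.n, τ i = ξ i := fun i => dif_pos i.is_lt
  have hsum : ∑ i : Fin P.n, F (f (ξ i)) (f (P.x i.succ) - f (P.x i.castSucc)) =
      riemannSum F f P τ := by
    rw [riemannSum, ← Fin.sum_univ_eq_sum_range]
    simp only [hτ, P.pt_castSucc, P.pt_succ]
  have hτP : P.IsTagging τ := fun j hj => by
    simpa only [hτ ⟨j, hj⟩, P.pt_castSucc ⟨j, hj⟩, P.pt_succ ⟨j, hj⟩] using hξ ⟨j, hj⟩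
  rw [hsum]
  exact (hδL P τ (hμδ P hP) hτP).trans_lt (half_lt_self hε)

end FineLimit

section Frechet

variable {M : ℕ} {f g : ℝ → EuclideanSpace ℝ (Fin M)} {a b c d : ℝ} {φ : ℝ → ℝ}
  {F : EuclideanSpace ℝ (Fin M) → EuclideanSpace ℝ (Fin M) → ℝ}

lemma IsIncrHomeo.surjOn (hφ : IsIncrHomeo φ a b c d) (hab : a ≤ b) :
    Set.SurjOn φ (Set.Icc a b) (Set.Icc c d) := by
  have h := intermediate_value_Icc hab hφ.1
  rwa [hφ.2.2.1, hφ.2.2.2] at h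

namespace IntervalPartition

lemma x_mem_Icc (P : IntervalPartition a b) (i : Fin (P.n + 1)) : P.x i ∈ Set.Icc a b := by
  simpa only [P.pt_of_le (Nat.lt_succ_iff.1 i.is_lt)] using P.pt_mem_Icc i

def map (P : IntervalPartition a b) (hφ : IsIncrHomeo φ a b c d) : IntervalPartition c d where
  n := P.n
  x := φ ∘ P.x
  mono _ _ hij := hφ.2.1 (P.x_mem_Icc _) (P.x_mem_Icc _) (P.mono hij)
  first := by simp only [Function.comp_apply, P.first, hφ.2.2.1]
  last := by simp only [Function.comp_apply, P.last, hφ.2.2.2]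

lemma pt_map (P : IntervalPartition a b) (hφ : IsIncrHomeo φ a b c d) (k : ℕ) :
    (P.map hφ).pt k = φ (P.pt k) := by
  rcases le_or_gt k P.n with hk | hk
  · rw [P.pt_of_le hk, (P.map hφ).pt_of_le hk]
    rfl
  · rw [P.pt_of_lt hk, (P.map hφ).pt_of_lt hk, hφ.2.2.2]

lemma exists_comp_pt_eq (hφ : IsIncrHomeo φ a b c d) (hab : a ≤ b) (Q : IntervalPartition c d) :
    ∃ P : IntervalPartition a b, P.n = Q.n ∧ ∀ k, φ (P.pt k) = Q.pt k := by
  choose t ht hφt using fun i : Fin (Q.n + 1) => hφ.surjOn hab (Q.x_mem_Icc i)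
  have hmono : StrictMono t := fun i j hij =>
    (hφ.2.1.lt_iff_lt (ht i) (ht j)).1 (by rw [hφt, hφt]; exact Q.mono hij)
  have hfirst : t 0 = a :=
    hφ.2.1.injOn (ht 0) (Set.left_mem_Icc.2 hab) (by rw [hφt, Q.first, hφ.2.2.1])
  have hlast : t (Fin.last Q.n) = b :=
    hφ.2.1.injOn (ht _) (Set.right_mem_Icc.2 hab) (by rw [hφt, Q.last, hφ.2.2.2])
  let P : IntervalPartition a b := ⟨Q.n, t, hmono, hfirst, hlast⟩
  refine ⟨P, rfl, fun k => ?_⟩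
  rcases le_or_gt k Q.n with hk | hk
  · rw [Q.pt_of_le hk, P.pt_of_le hk]
    exact hφt _
  · rw [Q.pt_of_lt hk, P.pt_of_lt hk, hφ.2.2.2]

end IntervalPartition

lemma curveLength_eq_of_frechetEquiv (hab : a ≤ b) (hfg : FrechetEquiv f a b g c d) :
    curveLength f a b = curveLength g c d := by
  refine le_antisymm (curveLength_le_of_forall_exists_norm_sub_le fun P ε hε => ?_)
    (curveLength_le_of_forall_exists_norm_sub_le fun Q ε hε => ?_)
  · obtain ⟨φ, hφ, hφε⟩ := hfg ε hε
    exact ⟨P.map hφ, rfl, fun k _ => by rw [P.pt_map]; exact (hφε _ (P.pt_mem_Icc k)).le⟩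
  · obtain ⟨φ, hφ, hφε⟩ := hfg ε hε
    obtain ⟨P, hPn, hPQ⟩ := IntervalPartition.exists_comp_pt_eq hφ hab Q
    exact ⟨P, hPn, fun k _ => by rw [← hPQ, norm_sub_rev]; exact (hφε _ (P.pt_mem_Icc k)).le⟩

lemma IntervalPartition.IsFine.map {P : IntervalPartition a b} {θ ε : ℝ} (hP : P.IsFine f θ)
    (hφ : IsIncrHomeo φ a b c d) (hfg : ∀ x ∈ Set.Icc a b, ‖f x - g (φ x)‖ ≤ ε)
    (hℓ : (curveLength g c d).toReal ≤ (curveLength f a b).toReal) :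
    (P.map hφ).IsFine g (θ + 2 * (P.n + 1) * ε) := by
  have hε : 0 ≤ ε := (norm_nonneg _).trans (hfg _ (P.pt_mem_Icc 0))
  refine ⟨fun j hj s hs t ht => ?_, ?_⟩
  · rw [P.pt_map, P.pt_map] at hs ht
    have hφj : ContinuousOn φ (Set.Icc (P.pt j) (P.pt (j + 1))) :=
      hφ.1.mono (P.Icc_pt_subset j)
    obtain ⟨σ, hσ, rfl⟩ := intermediate_value_Icc (P.monotone_pt j.le_succ) hφj hs
    obtain ⟨ρ, hρ, rfl⟩ := intermediate_value_Icc (P.monotone_pt j.le_succ) hφj ht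
    have h1 := hfg σ (P.Icc_pt_subset j hσ)
    have h2 := hfg ρ (P.Icc_pt_subset j hρ)
    have h3 : ‖g (φ σ) - g (φ ρ)‖ ≤ ‖f σ - f ρ‖ + ‖f σ - g (φ σ)‖ + ‖f ρ - g (φ ρ)‖ := by
      calc ‖g (φ σ) - g (φ ρ)‖ = ‖(f σ - f ρ) - (f σ - g (φ σ)) + (f ρ - g (φ ρ))‖ := by
            congr 1; abel
        _ ≤ _ := norm_add_le_of_le (norm_sub_le _ _) le_rfl
    nlinarith [hP.1 j hj σ hσ ρ hρ]
  · have h := sum_norm_sub_le_add (fun k => f (P.pt k)) (fun k => g ((P.map hφ).pt k)) (n := P.n)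
      fun k _ => by rw [P.pt_map]; exact hfg _ (P.pt_mem_Icc k)
    have hg : inscribedSum g (P.map hφ) =
        ∑ k ∈ range P.n, ‖g ((P.map hφ).pt (k + 1)) - g ((P.map hφ).pt k)‖ :=
      inscribedSum_eq_sum_range g _
    rw [hg]
    linarith [hP.2, inscribedSum_eq_sum_range f P]

lemma HasFineLimit.eq_of_frechetEquiv {Lf Lg : ℝ} (hLf : HasFineLimit F f a b Lf)
    (hLg : HasFineLimit F g c d Lg) (hab : a < b) (hcf : ContinuousOn f (Set.Icc a b))
    (hcg : ContinuousOn g (Set.Icc c d)) (hf : curveLength f a b ≠ ⊤)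
    (hfg : FrechetEquiv f a b g c d) (hF : IsParametricIntegrand F) : Lf = Lg := by
  refine eq_of_forall_dist_le fun ε hε => ?_
  obtain ⟨δf, hδf, hPf⟩ := hLf (ε / 3) (by positivity)
  obtain ⟨δg, hδg, hPg⟩ := hLg (ε / 3) (by positivity)
  obtain ⟨P, hP⟩ := exists_isFine hab hcf hf (lt_min hδf (half_pos hδg))
  obtain ⟨ρ, hρ, hρε⟩ := exists_pos_abs_sum_sub_sum_le hF.1
    ((isCompact_Icc.image_of_continuousOn hcf).union (isCompact_Icc.image_of_continuousOn hcg))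
    P.n (show 0 < ε / 3 by positivity)
  set ε' := min ρ (δg / (4 * (P.n + 1)))
  obtain ⟨φ, hφ, hφε⟩ := hfg ε' (lt_min hρ (by positivity))
  have hℓ : (curveLength g c d).toReal ≤ (curveLength f a b).toReal := by
    rw [curveLength_eq_of_frechetEquiv hab.le hfg]
  have hδ : min δf (δg / 2) + 2 * (P.n + 1) * ε' ≤ δg := by
    have h1 : 2 * (P.n + 1) * ε' ≤ δg / 2 := by
      calc 2 * (P.n + 1) * ε' ≤ 2 * (P.n + 1) * (δg / (4 * (P.n + 1))) :=
            mul_le_mul_of_nonneg_left (min_le_right _ _) (by positivity)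
        _ = δg / 2 := by field_simp; ring
    linarith [min_le_right δf (δg / 2)]
  have hPφ := (hP.map hφ (fun x hx => (hφε x hx).le) hℓ).mono hδ
  have h1 := hPf P P.pt (hP.mono (min_le_left _ _)) P.isTagging_pt
  have h2 := hPg (P.map hφ) (P.map hφ).pt hPφ (P.map hφ).isTagging_pt
  have h3 : |riemannSum F f P P.pt - riemannSum F g (P.map hφ) (P.map hφ).pt| ≤ ε / 3 :=
    hρε (fun k => f (P.pt k)) (fun k => g ((P.map hφ).pt k))
      (fun k => Or.inl (Set.mem_image_of_mem f (P.pt_mem_Icc k)))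
      (fun k => Or.inr (Set.mem_image_of_mem g ((P.map hφ).pt_mem_Icc k)))
      (fun k _ => by rw [P.pt_map]; exact (hφε _ (P.pt_mem_Icc k)).le.trans (min_le_left _ _))
  rw [Real.dist_eq, abs_le]
  rw [abs_le] at h1 h2 h3
  constructor <;> linarith

end Frechet

/-- If `C ↔ f : [a,b] → ℝ^M` and `D ↔ g : [c,d] → ℝ^M` are continuous
rectifiable Fréchet equivalent curves and `F` is a parametric integrand, then the line
integrals (which exist) are equal: `∫_C F = ∫_D F`. -/
theorem lineIntegral_eq_of_frechetEquiv {M : ℕ} (a b c d : ℝ) (hab : a < b) (hcd : c < d)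
    (f g : ℝ → EuclideanSpace ℝ (Fin M))
    (hcf : ContinuousOn f (Set.Icc a b)) (hrf : curveLength f a b < ⊤)
    (hcg : ContinuousOn g (Set.Icc c d)) (hrg : curveLength g c d < ⊤)
    (hfg : FrechetEquiv f a b g c d)
    (F : EuclideanSpace ℝ (Fin M) → EuclideanSpace ℝ (Fin M) → ℝ)
    (hF : IsParametricIntegrand F) :
    ∃ L : ℝ, IsLineIntegral F f a b L ∧ IsLineIntegral F g c d L := by
  obtain ⟨Lf, hLf⟩ := exists_hasFineLimit hab hcf hrf.ne hF
  obtain ⟨Lg, hLg⟩ := exists_hasFineLimit hcd hcg hrg.ne hF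
  have hL : Lf = Lg := hLf.eq_of_frechetEquiv hLg hab hcf hcg hrf.ne hfg hF
  exact ⟨Lf, hLf.isLineIntegral hab hcf hrf.ne, hL ▸ hLg.isLineIntegral hcd hcg hrg.ne⟩

end
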